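/- Fix an odd integer n ≥ 3 and let H be the 6n × (4n²−2n) block–point incidence matrix of the construction, viewed over GF(2). Then every nonzero vector v ∈ GF(2)^{4n²−2n} with H v = 0 has Hamming weight at least 6; equivalently, no nonempty set of at most 5 columns of H is linearly dependent over GF(2). Combined with the existence of a weight-6 codeword, the minimum distance of the LDPC code with parity-check matrix H is exactly 6. -/

import Mathlib

/-!
A column `q` meets each of the three groups of `2n` rows in one point, with coordinates
`q.a`, `q.b`, `q.c` modulo `2n`, and any two of these determine `q`; so two columns share at most
one row. Every row meets the support of a codeword in an even number of columns, hence a support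
column `p₁` has a partner `p₂`, `p₃`, `p₄` in each of its three rows, all distinct: the weight is
at least 4. It is even, since the first group of rows partitions the columns. A support of size
exactly 4 would be a 4-cycle whose three perfect matchings are the three coordinate classes, and
for odd `n` the resulting congruences on the `j`'s have no solution. A codeword of weight 6 is
given by six columns forming a `K₃,₃`.
-/

def xfun (n j : ℕ) : ℕ := if j < n then 2 * j + 1 else 2 * (j - n)

def Blk (n j a : ℕ) : Finset ℕ :=
  {a, (j + a) % (2 * n) + 2 * n, (xfun n j + a) % (2 * n) + 4 * n}

abbrev ColIdx (n : ℕ) := {p : Fin (2 * n) × Fin (2 * n) // (p.1 : ℕ) ≠ n}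

def Hmat (n : ℕ) : Matrix (Fin (6 * n)) (ColIdx n) (ZMod 2) :=
  fun i p => if (i : ℕ) ∈ Blk n (p.1.1 : ℕ) (p.1.2 : ℕ) then 1 else 0

open Finset Matrix

namespace Matrix

variable {m ι R : Type*} [Fintype ι]

theorem exists_ne_apply_ne_zero_of_mulVec_eq_zero [Semiring R] [NoZeroDivisors R]
    {H : Matrix m ι R} {v : ι → R} (hv : H *ᵥ v = 0) {i : m} {p : ι}
    (hip : H i p ≠ 0) (hp : v p ≠ 0) : ∃ q ≠ p, H i q ≠ 0 ∧ v q ≠ 0 := by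
  by_contra! h
  have hi := congrFun hv i
  rw [mulVec, dotProduct, sum_eq_single p (fun q _ hqp => ?_) (by simp)] at hi
  · exact mul_ne_zero hip hp hi
  · by_cases hq : H i q = 0
    · rw [hq, zero_mul]
    · rw [h q hqp hq, mul_zero]

theorem mulVec_apply_eq_card_zmod_two (H : Matrix m ι (ZMod 2)) (v : ι → ZMod 2) (i : m) :
    (H *ᵥ v) i = #{q | H i q ≠ 0 ∧ v q ≠ 0} := by
  have hmul : ∀ x y : ZMod 2, x * y = if x ≠ 0 ∧ y ≠ 0 then 1 else 0 := by decide
  simp only [mulVec, dotProduct, hmul, sum_boole]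

theorem two_dvd_card_of_mulVec_eq_zero {H : Matrix m ι (ZMod 2)} {v : ι → ZMod 2}
    (hv : H *ᵥ v = 0) (i : m) : 2 ∣ #{q | H i q ≠ 0 ∧ v q ≠ 0} := by
  rw [← ZMod.natCast_eq_zero_iff, ← mulVec_apply_eq_card_zmod_two, hv, Pi.zero_apply]

end Matrix

theorem Nat.eq_or_eq_add_of_mod_eq {N x y : ℕ} (h : x % N = y % N) (hx : x < 2 * N)
    (hy : y < 2 * N) : x = y ∨ x = y + N ∨ y = x + N := by
  have hx' := Nat.mod_add_div x N
  have hy' := Nat.mod_add_div y N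
  have hxN : x / N < 2 := Nat.div_lt_of_lt_mul (by omega)
  have hyN : y / N < 2 := Nat.div_lt_of_lt_mul (by omega)
  interval_cases x / N <;> interval_cases y / N <;> omega

section xfun

variable {n j : ℕ}

theorem xfun_of_lt (h : j < n) : xfun n j = 2 * j + 1 := if_pos h

theorem xfun_add_left (k : ℕ) : xfun n (n + k) = 2 * k := by
  simp [xfun]

theorem xfun_cases (hj : j ≠ n) :
    j < n ∧ xfun n j = 2 * j + 1 ∨ n < j ∧ xfun n j + 2 * n = 2 * j := by
  unfold xfun
  split_ifs <;> omega

/- Modulo `2n`, `xfun n j ≡ 2j + εⱼ` with `εⱼ = [j < n]`, and the congruences give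
`4(j₂ - j₁) ≡ ε₁ + ε₃ - ε₂ - ε₄`. Oddness of `n` enters when the right side vanishes: then
`j₂ ≡ j₁ (mod n)`. What remains is a finite case analysis on the `εᵢ`. -/
theorem eq_of_xfun_cycle {j₁ j₂ j₃ j₄ : ℕ} (hodd : Odd n)
    (h₁ : j₁ < 2 * n) (h₂ : j₂ < 2 * n) (h₃ : j₃ < 2 * n) (h₄ : j₄ < 2 * n)
    (h₁n : j₁ ≠ n) (h₂n : j₂ ≠ n) (h₃n : j₃ ≠ n) (h₄n : j₄ ≠ n)
    (hj : j₁ + j₄ ≡ j₂ + j₃ [MOD 2 * n])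
    (hx₁₄ : j₁ + xfun n j₄ ≡ j₃ + xfun n j₁ [MOD 2 * n])
    (hx₂₃ : j₂ + xfun n j₃ ≡ j₄ + xfun n j₂ [MOD 2 * n]) : j₃ = j₄ := by
  obtain ⟨m, rfl⟩ := hodd
  have x₁ := xfun_cases h₁n
  have x₂ := xfun_cases h₂n
  have x₃ := xfun_cases h₃n
  have x₄ := xfun_cases h₄n
  have e := Nat.eq_or_eq_add_of_mod_eq hj (by omega) (by omega)
  have e₁₄ := Nat.eq_or_eq_add_of_mod_eq hx₁₄ (by omega) (by omega)
  have e₂₃ := Nat.eq_or_eq_add_of_mod_eq hx₂₃ (by omega) (by omega)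
  generalize xfun (2 * m + 1) j₁ = x₁ at *
  generalize xfun (2 * m + 1) j₂ = x₂ at *
  generalize xfun (2 * m + 1) j₃ = x₃ at *
  generalize xfun (2 * m + 1) j₄ = x₄ at *
  clear hj hx₁₄ hx₂₃
  omega

end xfun

namespace ColIdx

variable {n : ℕ}

/- A column `q = (j, a)` has block `{q.a, q.b + 2n, q.c + 4n}`, one point in each of the three
groups of `2n` rows. -/
def j (q : ColIdx n) : ℕ := q.1.1
def a (q : ColIdx n) : ℕ := q.1.2
def b (q : ColIdx n) : ℕ := (q.j + q.a) % (2 * n)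
def c (q : ColIdx n) : ℕ := (xfun n q.j + q.a) % (2 * n)

theorem j_lt (q : ColIdx n) : q.j < 2 * n := q.1.1.isLt
theorem j_ne (q : ColIdx n) : q.j ≠ n := q.2
theorem a_lt (q : ColIdx n) : q.a < 2 * n := q.1.2.isLt
theorem b_lt (q : ColIdx n) : q.b < 2 * n := Nat.mod_lt _ q.1.1.pos
theorem c_lt (q : ColIdx n) : q.c < 2 * n := Nat.mod_lt _ q.1.1.pos

theorem blk_eq (q : ColIdx n) : Blk n q.1.1 q.1.2 = {q.a, q.b + 2 * n, q.c + 4 * n} := rfl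

theorem mem_blk_iff_a_eq {q : ColIdx n} {r : ℕ} (hr : r < 2 * n) :
    r ∈ Blk n q.1.1 q.1.2 ↔ q.a = r := by
  simp only [blk_eq, mem_insert, mem_singleton]
  omega

theorem add_mem_blk_iff_b_eq {q : ColIdx n} {r : ℕ} (hr : r < 2 * n) :
    r + 2 * n ∈ Blk n q.1.1 q.1.2 ↔ q.b = r := by
  have := q.a_lt
  simp only [blk_eq, mem_insert, mem_singleton]
  omega

theorem add_mem_blk_iff_c_eq {q : ColIdx n} {r : ℕ} (hr : r < 2 * n) :
    r + 4 * n ∈ Blk n q.1.1 q.1.2 ↔ q.c = r := by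
  have := q.a_lt
  have := q.b_lt
  simp only [blk_eq, mem_insert, mem_singleton]
  omega

theorem ext {p q : ColIdx n} (hj : p.j = q.j) (ha : p.a = q.a) : p = q :=
  Subtype.ext (Prod.ext (Fin.ext hj) (Fin.ext ha))

theorem ext_a_b {p q : ColIdx n} (ha : p.a = q.a) (hb : p.b = q.b) : p = q := by
  have := p.j_lt; have := q.j_lt; have := p.a_lt; have := q.a_lt
  have := Nat.eq_or_eq_add_of_mod_eq hb (by omega) (by omega)
  exact ext (by omega) ha

theorem ext_a_c {p q : ColIdx n} (ha : p.a = q.a) (hc : p.c = q.c) : p = q := by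
  have := p.j_lt; have := q.j_lt; have := p.a_lt; have := q.a_lt
  have := xfun_cases p.j_ne
  have := xfun_cases q.j_ne
  have := Nat.eq_or_eq_add_of_mod_eq hc (by omega) (by omega)
  exact ext (by omega) ha

theorem ext_b_c {p q : ColIdx n} (hb : p.b = q.b) (hc : p.c = q.c) : p = q := by
  have := p.j_lt; have := q.j_lt; have := p.a_lt; have := q.a_lt
  have := xfun_cases p.j_ne
  have := xfun_cases q.j_ne
  have := Nat.eq_or_eq_add_of_mod_eq hb (by omega) (by omega)
  have := Nat.eq_or_eq_add_of_mod_eq hc (by omega) (by omega)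
  exact ext (by omega) (by omega)

theorem eq_of_four_cycle (hodd : Odd n) {p₁ p₂ p₃ p₄ : ColIdx n}
    (ha₁₂ : p₁.a = p₂.a) (ha₃₄ : p₃.a = p₄.a) (hb₁₃ : p₁.b = p₃.b) (hb₂₄ : p₂.b = p₄.b)
    (hc₁₄ : p₁.c = p₄.c) (hc₂₃ : p₂.c = p₃.c) : p₃ = p₄ := by
  have hb₁₃ : p₁.j + p₁.a ≡ p₃.j + p₃.a [MOD 2 * n] := hb₁₃
  have hb₂₄ : p₂.j + p₂.a ≡ p₄.j + p₄.a [MOD 2 * n] := hb₂₄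
  have hc₁₄ : xfun n p₁.j + p₁.a ≡ xfun n p₄.j + p₄.a [MOD 2 * n] := hc₁₄
  have hc₂₃ : xfun n p₂.j + p₂.a ≡ xfun n p₃.j + p₃.a [MOD 2 * n] := hc₂₃
  refine ext (eq_of_xfun_cycle hodd p₁.j_lt p₂.j_lt p₃.j_lt p₄.j_lt p₁.j_ne p₂.j_ne p₃.j_ne
    p₄.j_ne ?_ ?_ ?_) ha₃₄
  · refine Nat.ModEq.add_right_cancel' (p₁.a + p₃.a) ?_
    convert hb₁₃.add hb₂₄.symm using 1 <;> omega
  · refine Nat.ModEq.add_right_cancel' (p₁.a + p₃.a) ?_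
    convert hb₁₃.add hc₁₄.symm using 1 <;> omega
  · refine Nat.ModEq.add_right_cancel' (p₁.a + p₃.a) ?_
    convert hb₂₄.add hc₂₃.symm using 1 <;> omega

end ColIdx

section lowerBound

variable {n : ℕ} {v : ColIdx n → ZMod 2}

theorem Hmat_ne_zero_iff {i : Fin (6 * n)} {q : ColIdx n} :
    Hmat n i q ≠ 0 ↔ (i : ℕ) ∈ Blk n q.1.1 q.1.2 := by
  unfold Hmat
  split_ifs <;> simp [*]

theorem exists_mate (hv : Hmat n *ᵥ v = 0) {p : ColIdx n} (hp : v p ≠ 0) {r : ℕ}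
    (hr : r < 6 * n) (hrp : r ∈ Blk n p.1.1 p.1.2) :
    ∃ q ≠ p, v q ≠ 0 ∧ r ∈ Blk n q.1.1 q.1.2 := by
  obtain ⟨q, hqp, hq, hvq⟩ := Matrix.exists_ne_apply_ne_zero_of_mulVec_eq_zero hv
    (i := ⟨r, hr⟩) (Hmat_ne_zero_iff.2 hrp) hp
  exact ⟨q, hqp, hvq, Hmat_ne_zero_iff.1 hq⟩

theorem exists_mate_a (hv : Hmat n *ᵥ v = 0) {p : ColIdx n} (hp : v p ≠ 0) :
    ∃ q ≠ p, v q ≠ 0 ∧ q.a = p.a := by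
  have := p.a_lt
  simpa only [ColIdx.mem_blk_iff_a_eq this] using
    exists_mate hv hp (by omega) ((ColIdx.mem_blk_iff_a_eq this).2 rfl)

theorem exists_mate_b (hv : Hmat n *ᵥ v = 0) {p : ColIdx n} (hp : v p ≠ 0) :
    ∃ q ≠ p, v q ≠ 0 ∧ q.b = p.b := by
  have := p.b_lt
  simpa only [ColIdx.add_mem_blk_iff_b_eq this] using
    exists_mate hv hp (by omega) ((ColIdx.add_mem_blk_iff_b_eq this).2 rfl)

theorem exists_mate_c (hv : Hmat n *ᵥ v = 0) {p : ColIdx n} (hp : v p ≠ 0) :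
    ∃ q ≠ p, v q ≠ 0 ∧ q.c = p.c := by
  have := p.c_lt
  simpa only [ColIdx.add_mem_blk_iff_c_eq this] using
    exists_mate hv hp (by omega) ((ColIdx.add_mem_blk_iff_c_eq this).2 rfl)

/- Every column meets exactly one of the first `2n` rows, and each of these rows meets the
support in an even number of columns. -/
theorem two_dvd_card_support (hv : Hmat n *ᵥ v = 0) : 2 ∣ #{q | v q ≠ 0} := by
  rw [card_eq_sum_card_fiberwise (f := ColIdx.a) (t := range (2 * n))
    (fun q _ => mem_coe.2 (mem_range.2 q.a_lt))]
  refine dvd_sum fun r hr => ?_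
  have hr := mem_range.1 hr
  have hfiber : {q ∈ ({q | v q ≠ 0} : Finset (ColIdx n)) | q.a = r} =
      ({q | Hmat n ⟨r, by omega⟩ q ≠ 0 ∧ v q ≠ 0} : Finset (ColIdx n)) := by
    ext q
    simp only [mem_filter, mem_univ, true_and, Hmat_ne_zero_iff, ColIdx.mem_blk_iff_a_eq hr]
    tauto
  rw [hfiber]
  exact Matrix.two_dvd_card_of_mulVec_eq_zero hv _

theorem four_cycle_of_support_eq (hv : Hmat n *ᵥ v = 0) {p₁ p₂ p₃ p₄ : ColIdx n}
    (hS : ({q | v q ≠ 0} : Finset (ColIdx n)) = {p₁, p₂, p₃, p₄})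
    (hp₂ : v p₂ ≠ 0) (hp₃ : v p₃ ≠ 0) (h₂₁ : p₂ ≠ p₁) (h₃₁ : p₃ ≠ p₁)
    (ha₂ : p₂.a = p₁.a) (hb₃ : p₃.b = p₁.b) (hc₄ : p₄.c = p₁.c) :
    p₃.a = p₄.a ∧ p₂.b = p₄.b ∧ p₂.c = p₃.c := by
  have mem : ∀ q, v q ≠ 0 → q = p₁ ∨ q = p₂ ∨ q = p₃ ∨ q = p₄ := fun q hq => by
    simpa [hS] using (mem_filter.2 ⟨mem_univ q, hq⟩ : q ∈ ({q | v q ≠ 0} : Finset _))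
  refine ⟨?_, ?_, ?_⟩
  · obtain ⟨q, hq₃, hq, ha⟩ := exists_mate_a hv hp₃
    rcases mem q hq with rfl | rfl | rfl | rfl
    · exact absurd (ColIdx.ext_a_b ha.symm hb₃) h₃₁
    · exact absurd (ColIdx.ext_a_b (ha.symm.trans ha₂) hb₃) h₃₁
    · exact absurd rfl hq₃
    · exact ha.symm
  · obtain ⟨q, hq₂, hq, hb⟩ := exists_mate_b hv hp₂
    rcases mem q hq with rfl | rfl | rfl | rfl
    · exact absurd (ColIdx.ext_a_b ha₂ hb.symm) h₂₁
    · exact absurd rfl hq₂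
    · exact absurd (ColIdx.ext_a_b ha₂ (hb.symm.trans hb₃)) h₂₁
    · exact hb.symm
  · obtain ⟨q, hq₂, hq, hc⟩ := exists_mate_c hv hp₂
    rcases mem q hq with rfl | rfl | rfl | rfl
    · exact absurd (ColIdx.ext_a_c ha₂ hc.symm) h₂₁
    · exact absurd rfl hq₂
    · exact hc.symm
    · exact absurd (ColIdx.ext_a_c ha₂ (hc.symm.trans hc₄)) h₂₁

theorem six_le_card_support (hodd : Odd n) (hv₀ : v ≠ 0) (hv : Hmat n *ᵥ v = 0) :
    6 ≤ #{q | v q ≠ 0} := by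
  obtain ⟨p₁, hp₁⟩ : ∃ p, v p ≠ 0 := Function.ne_iff.1 hv₀
  obtain ⟨p₂, h₂₁, hp₂, ha₂⟩ := exists_mate_a hv hp₁
  obtain ⟨p₃, h₃₁, hp₃, hb₃⟩ := exists_mate_b hv hp₁
  obtain ⟨p₄, h₄₁, hp₄, hc₄⟩ := exists_mate_c hv hp₁
  have h₃₂ : p₃ ≠ p₂ := fun h => h₂₁ (ColIdx.ext_a_b ha₂ (h ▸ hb₃))
  have h₄₂ : p₄ ≠ p₂ := fun h => h₂₁ (ColIdx.ext_a_c ha₂ (h ▸ hc₄))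
  have h₄₃ : p₄ ≠ p₃ := fun h => h₃₁ (ColIdx.ext_b_c hb₃ (h ▸ hc₄))
  have hsub : {p₁, p₂, p₃, p₄} ⊆ ({q | v q ≠ 0} : Finset (ColIdx n)) := by
    simp [insert_subset_iff, hp₁, hp₂, hp₃, hp₄]
  have hcard : #{p₁, p₂, p₃, p₄} = 4 := by
    rw [card_insert_of_notMem, card_insert_of_notMem, card_pair h₄₃.symm] <;>
      simp [h₂₁.symm, h₃₁.symm, h₄₁.symm, h₃₂.symm, h₄₂.symm]
  by_contra! hlt
  have hS := (eq_of_subset_of_card_le hsub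
    (by have := two_dvd_card_support hv; have := card_le_card hsub; omega)).symm
  obtain ⟨ha₃₄, hb₂₄, hc₂₃⟩ := four_cycle_of_support_eq hv hS hp₂ hp₃ h₂₁ h₃₁ ha₂ hb₃ hc₄
  exact h₄₃ (ColIdx.eq_of_four_cycle hodd ha₂.symm ha₃₄ hb₃.symm hb₂₄ hc₄.symm hc₂₃).symm

end lowerBound

section witness

variable {n : ℕ}

theorem Hmat_apply_eq_add (i : Fin (6 * n)) (q : ColIdx n) :
    Hmat n i q = (if (i : ℕ) = q.a then 1 else 0) + (if (i : ℕ) = q.b + 2 * n then 1 else 0) +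
      (if (i : ℕ) = q.c + 4 * n then 1 else 0) := by
  have := q.a_lt
  have := q.b_lt
  simp only [Hmat, ColIdx.blk_eq, mem_insert, mem_singleton]
  split_ifs <;> first | omega | decide

/- Six columns forming a `K₃,₃`: on them `a` takes the values `2, 1, 2, 0, 0, 1`, `b` the values
`2, n + 2, n + 3, 2, n + 2, n + 3` and `c` the values `3, 3, 4, 5, 4, 5`. -/
def weightSixSupport (n : ℕ) (hn : 3 ≤ n) (k : Fin 6) : ColIdx n :=
  ⟨(⟨![0, n + 1, n + 1, 2, n + 2, n + 2] k, by fin_cases k <;> simp <;> omega⟩,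
    ⟨![2, 1, 2, 0, 0, 1] k, by fin_cases k <;> simp <;> omega⟩), by fin_cases k <;> simp <;> omega⟩

theorem weightSixSupport_injective (hn : 3 ≤ n) : Function.Injective (weightSixSupport n hn) := by
  intro k l h
  fin_cases k <;> fin_cases l <;> simp [weightSixSupport, Subtype.ext_iff, Prod.ext_iff] at h ⊢ <;> omega

theorem sum_Hmat_weightSixSupport (hn : 3 ≤ n) (i : Fin (6 * n)) :
    ∑ k, Hmat n i (weightSixSupport n hn k) = 0 := by
  have hx₀ := xfun_of_lt (show 0 < n by omega)
  have hx₂ := xfun_of_lt (show 2 < n by omega)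
  obtain ⟨ha₀₂, ha₁₅, ha₃₄⟩ : (weightSixSupport n hn 0).a = (weightSixSupport n hn 2).a ∧
      (weightSixSupport n hn 1).a = (weightSixSupport n hn 5).a ∧ (weightSixSupport n hn 3).a = (weightSixSupport n hn 4).a :=
    ⟨rfl, rfl, rfl⟩
  obtain ⟨hb₀₃, hb₁₄, hb₂₅⟩ : (weightSixSupport n hn 0).b = (weightSixSupport n hn 3).b ∧
      (weightSixSupport n hn 1).b = (weightSixSupport n hn 4).b ∧ (weightSixSupport n hn 2).b = (weightSixSupport n hn 5).b := by
    simp [ColIdx.b, ColIdx.j, ColIdx.a, weightSixSupport]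
  obtain ⟨hc₀₁, hc₂₄, hc₃₅⟩ : (weightSixSupport n hn 0).c = (weightSixSupport n hn 1).c ∧
      (weightSixSupport n hn 2).c = (weightSixSupport n hn 4).c ∧ (weightSixSupport n hn 3).c = (weightSixSupport n hn 5).c := by
    simp [ColIdx.c, ColIdx.j, ColIdx.a, weightSixSupport, hx₀, hx₂, xfun_add_left]
  simp only [Fin.sum_univ_six, Hmat_apply_eq_add]
  rw [ha₀₂, ha₁₅, ha₃₄, hb₀₃, hb₁₄, hb₂₅, hc₀₁, hc₂₄, hc₃₅]
  ring_nf
  reduce_mod_char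

theorem exists_weight_six (hn : 3 ≤ n) :
    ∃ v : ColIdx n → ZMod 2, v ≠ 0 ∧ Hmat n *ᵥ v = 0 ∧ #{q | v q ≠ 0} = 6 := by
  set T := univ.map ⟨weightSixSupport n hn, weightSixSupport_injective hn⟩
  have hsupp : ({q | (if q ∈ T then 1 else 0 : ZMod 2) ≠ 0} : Finset (ColIdx n)) = T := by
    ext q
    by_cases hq : q ∈ T <;> simp [hq]
  refine ⟨fun q => if q ∈ T then 1 else 0, fun h => ?_, ?_, by rw [hsupp, card_map, card_fin]⟩
  · simpa [T] using congrFun h (weightSixSupport n hn 0)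
  · ext i
    simp only [mulVec, dotProduct, mul_ite, mul_one, mul_zero, sum_ite_mem, univ_inter, T,
      sum_map]
    exact sum_Hmat_weightSixSupport hn i

end witness

theorem stmt14 (n : ℕ) (hn : 3 ≤ n) (hodd : Odd n) :
    -- every nonzero codeword has Hamming weight at least 6
    (∀ v : ColIdx n → ZMod 2, v ≠ 0 → (Hmat n).mulVec v = 0 →
      6 ≤ (Finset.univ.filter fun p : ColIdx n => v p ≠ 0).card) ∧
    -- and there is a codeword of Hamming weight exactly 6,
    -- so the minimum distance of the code is exactly 6
    (∃ v : ColIdx n → ZMod 2, v ≠ 0 ∧ (Hmat n).mulVec v = 0 ∧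
      (Finset.univ.filter fun p : ColIdx n => v p ≠ 0).card = 6) :=
  ⟨fun _ hv₀ hv => six_le_card_support hodd hv₀ hv, exists_weight_six hn⟩
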